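/- Let {ε_t} be IID(0, σ²) and let ψ_i, π_j, ψ̂_i, π̂_j be real sequences, with the hatted sequences being random variables independent of {ε_t}. With P = T+h−1+r and X_{T+h} = Σ_{i=0}^{P} ψ_i ε_{T+h−i}, X̂_{T+h} = Σ_{i=h}^{P} Σ_{j=0}^{P−i} Σ_{k=0}^{P−i−j} ψ̂_i π̂_j ψ_k ε_{T+h−i−j−k}, the mean square error E[(X_{T+h} − X̂_{T+h})²] equals σ² Σ_{i=0}^{h−1} ψ_i² + σ²[Σ_{i=h}^{P} ψ_i² − 2 Σ_{i=h}^{P} Σ_{j=0}^{P−i} Σ_{k=0}^{P−i−j} ψ_{i+j+k} ψ_k E[ψ̂_i π̂_j] + Σ_{i=h}^{P} Σ_{j=0}^{P−i} Σ_{k=0}^{P−i−j} Σ_{i'=h}^{P} Σ_{j'=0}^{P−i'} Σ_{k'=0}^{P−i'−j'} ψ_k ψ_{k'} E[ψ̂_i π̂_j ψ̂_{i'} π̂_{j'}] δ_{i+j+k, i'+j'+k'}]. -/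

import Mathlib

/-!
`X` and `X̂` are finite linear combinations of the innovations, with deterministic
coefficients `ψ_i` for `X` and random coefficients `ψ̂_i π̂_j ψ_k` for `X̂`. Since the random
coefficients are independent of the innovations, `E[c ε_s ε_t] = E[c] σ² δ_{st}` for any such
coefficient `c`, so each of `E[X²]`, `E[X X̂]`, `E[X̂²]` collapses to a Kronecker-weighted double
sum. Expanding `(X - X̂)²` and splitting the lags of `X` at `h` gives the decomposition.
-/

open MeasureTheory ProbabilityTheory Finset

theorem sum_mul_mul_sum_mul {R A B : Type*} [CommSemiring R] (sA : Finset A) (sB : Finset B)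
    (a x : A → R) (b y : B → R) :
    (∑ α ∈ sA, a α * x α) * (∑ β ∈ sB, b β * y β)
      = ∑ α ∈ sA, ∑ β ∈ sB, (a α * b β) * (x α * y β) := by
  rw [sum_mul_sum]
  exact sum_congr rfl fun α _ => sum_congr rfl fun β _ => by ring

section WhiteNoise

variable {Ω ι : Type*} {m0 : MeasurableSpace Ω} {μ : Measure Ω} {ε : ι → Ω → ℝ} {σ2 : ℝ}

theorem indepFun_mul_of_indep {mhat : MeasurableSpace Ω}
    (hindep : Indep mhat (⨆ t, MeasurableSpace.comap (ε t) inferInstance) μ)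
    {c : Ω → ℝ} (hc : Measurable[mhat] c) (s t : ι) :
    IndepFun c (fun ω => ε s ω * ε t ω) μ := by
  have hε : ∀ u, Measurable[⨆ t, MeasurableSpace.comap (ε t) inferInstance] (ε u) := fun u =>
    measurable_iff_comap_le.2 (le_iSup (fun t => MeasurableSpace.comap (ε t) inferInstance) u)
  exact indep_of_indep_of_le_right
    (indep_of_indep_of_le_left hindep (measurable_iff_comap_le.1 hc))
    (measurable_iff_comap_le.1 ((hε s).mul (hε t)))

variable [DecidableEq ι]

structure IsWhiteNoise (μ : Measure Ω) (ε : ι → Ω → ℝ) (σ2 : ℝ) : Prop where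
  memLp : ∀ t, MemLp (ε t) 2 μ
  integral_mul : ∀ s t, ∫ ω, ε s ω * ε t ω ∂μ = σ2 * if s = t then 1 else 0

namespace IsWhiteNoise

theorem of_iIndepFun [IsFiniteMeasure μ] (hL2 : ∀ t, MemLp (ε t) 2 μ)
    (hmean : ∀ t, ∫ ω, ε t ω ∂μ = 0) (hvar : ∀ t, ∫ ω, ε t ω ^ 2 ∂μ = σ2)
    (hind : iIndepFun ε μ) : IsWhiteNoise μ ε σ2 where
  memLp := hL2
  integral_mul s t := by
    rcases eq_or_ne s t with rfl | hst
    · simp only [if_true, mul_one, ← hvar s, sq]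
    · rw [if_neg hst, mul_zero, (hind.indepFun hst).integral_fun_mul_eq_mul_integral
        (hL2 s).aestronglyMeasurable (hL2 t).aestronglyMeasurable, hmean s, zero_mul]

theorem integrable_mul (hε : IsWhiteNoise μ ε σ2) (s t : ι) :
    Integrable (fun ω => ε s ω * ε t ω) μ :=
  (hε.memLp s).integrable_mul (hε.memLp t)

variable {mhat : MeasurableSpace Ω}

theorem integrable_mul_mul (hε : IsWhiteNoise μ ε σ2)
    (hindep : Indep mhat (⨆ t, MeasurableSpace.comap (ε t) inferInstance) μ)
    {c : Ω → ℝ} (hc : Measurable[mhat] c) (hci : Integrable c μ) (s t : ι) :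
    Integrable (fun ω => c ω * (ε s ω * ε t ω)) μ :=
  (indepFun_mul_of_indep hindep hc s t).integrable_mul hci (hε.integrable_mul s t)

theorem integral_mul_mul (hε : IsWhiteNoise μ ε σ2)
    (hindep : Indep mhat (⨆ t, MeasurableSpace.comap (ε t) inferInstance) μ)
    {c : Ω → ℝ} (hc : Measurable[mhat] c) (hci : Integrable c μ) (s t : ι) :
    ∫ ω, c ω * (ε s ω * ε t ω) ∂μ = (∫ ω, c ω ∂μ) * (σ2 * if s = t then 1 else 0) := by
  rw [(indepFun_mul_of_indep hindep hc s t).integral_fun_mul_eq_mul_integral hci.1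
    (hε.integrable_mul s t).1, hε.integral_mul]

section Bilinear

variable {A B : Type*} (sA : Finset A) (sB : Finset B) (a : A → Ω → ℝ) (b : B → Ω → ℝ)
  (τ : A → ι) (τ' : B → ι)

theorem integrable_sum_mul_sum (hε : IsWhiteNoise μ ε σ2)
    (hindep : Indep mhat (⨆ t, MeasurableSpace.comap (ε t) inferInstance) μ)
    (hab : ∀ α β, Measurable[mhat] (fun ω => a α ω * b β ω))
    (habi : ∀ α β, Integrable (fun ω => a α ω * b β ω) μ) :
    Integrable (fun ω => (∑ α ∈ sA, a α ω * ε (τ α) ω) * (∑ β ∈ sB, b β ω * ε (τ' β) ω)) μ := by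
  simp only [sum_mul_mul_sum_mul]
  exact integrable_finsetSum _ fun α _ => integrable_finsetSum _ fun β _ =>
    hε.integrable_mul_mul hindep (hab α β) (habi α β) _ _

theorem integral_sum_mul_sum (hε : IsWhiteNoise μ ε σ2)
    (hindep : Indep mhat (⨆ t, MeasurableSpace.comap (ε t) inferInstance) μ)
    (hab : ∀ α β, Measurable[mhat] (fun ω => a α ω * b β ω))
    (habi : ∀ α β, Integrable (fun ω => a α ω * b β ω) μ) :
    ∫ ω, (∑ α ∈ sA, a α ω * ε (τ α) ω) * (∑ β ∈ sB, b β ω * ε (τ' β) ω) ∂μ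
      = σ2 * ∑ α ∈ sA, ∑ β ∈ sB, (∫ ω, a α ω * b β ω ∂μ) * if τ α = τ' β then 1 else 0 := by
  have hint α β := hε.integrable_mul_mul hindep (hab α β) (habi α β) (τ α) (τ' β)
  simp only [sum_mul_mul_sum_mul]
  rw [integral_finsetSum _ fun α _ => integrable_finsetSum _ fun β _ => hint α β, mul_sum]
  refine sum_congr rfl fun α _ => ?_
  rw [integral_finsetSum _ fun β _ => hint α β, mul_sum]
  refine sum_congr rfl fun β _ => ?_
  rw [hε.integral_mul_mul hindep (hab α β) (habi α β)]
  ring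

end Bilinear

end IsWhiteNoise

end WhiteNoise

def forecastTriples (h P : ℕ) : Finset ((_ : ℕ) × (_ : ℕ) × ℕ) :=
  (Icc h P).sigma fun i => (range (P - i + 1)).sigma fun j => range (P - i - j + 1)

theorem mem_forecastTriples {h P : ℕ} {p : (_ : ℕ) × (_ : ℕ) × ℕ} :
    p ∈ forecastTriples h P ↔ h ≤ p.1 ∧ p.1 + p.2.1 + p.2.2 ≤ P := by
  simp only [forecastTriples, mem_sigma, mem_Icc, mem_range]
  omega

theorem sum_forecastTriples {M : Type*} [AddCommMonoid M] (h P : ℕ) (f : ℕ → ℕ → ℕ → M) :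
    ∑ p ∈ forecastTriples h P, f p.1 p.2.1 p.2.2
      = ∑ i ∈ Icc h P, ∑ j ∈ range (P - i + 1), ∑ k ∈ range (P - i - j + 1), f i j k := by
  simp only [forecastTriples, sum_sigma]

theorem integral_sub_sq_eq {Ω : Type*} {m0 : MeasurableSpace Ω} {μ : Measure Ω} {f g : Ω → ℝ}
    (hff : Integrable (fun ω => f ω * f ω) μ) (hfg : Integrable (fun ω => f ω * g ω) μ)
    (hgg : Integrable (fun ω => g ω * g ω) μ) :
    ∫ ω, (f ω - g ω) ^ 2 ∂μ
      = ∫ ω, f ω * f ω ∂μ - 2 * ∫ ω, f ω * g ω ∂μ + ∫ ω, g ω * g ω ∂μ := by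
  calc ∫ ω, (f ω - g ω) ^ 2 ∂μ
      = ∫ ω, (f ω * f ω - 2 * (f ω * g ω)) + g ω * g ω ∂μ :=
        integral_congr_ae (ae_of_all _ fun ω => by ring)
    _ = _ := by
      have h2fg : Integrable (fun ω => 2 * (f ω * g ω)) μ := hfg.const_mul 2
      have hdiff : Integrable (fun ω => f ω * f ω - 2 * (f ω * g ω)) μ := hff.sub h2fg
      rw [integral_add hdiff hgg, integral_sub hff h2fg, integral_const_mul]

section Forecast

variable {Ω : Type*} {m0 : MeasurableSpace Ω} {μ : Measure Ω} {ε : ℤ → Ω → ℝ} {σ2 : ℝ}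
  (ψ : ℕ → ℝ) (ψhat πhat : ℕ → Ω → ℝ) (t0 : ℤ)

def linearProcess (ε : ℤ → Ω → ℝ) (n : ℕ) (ω : Ω) : ℝ :=
  ∑ i ∈ range n, ψ i * ε (t0 - i) ω

def forecastCoeff (p : (_ : ℕ) × (_ : ℕ) × ℕ) (ω : Ω) : ℝ :=
  ψhat p.1 ω * πhat p.2.1 ω * ψ p.2.2

/-- The paper's `X̂_{T+h}` with `t0 = T + h`, indexed by `p = (i, j, k)`. -/
def forecast (ε : ℤ → Ω → ℝ) (h P : ℕ) (ω : Ω) : ℝ :=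
  ∑ p ∈ forecastTriples h P, forecastCoeff ψ ψhat πhat p ω * ε (t0 - ↑(p.1 + p.2.1 + p.2.2)) ω

theorem forecast_eq (ε : ℤ → Ω → ℝ) (h P : ℕ) (ω : Ω) :
    forecast ψ ψhat πhat t0 ε h P ω
      = ∑ i ∈ Icc h P, ∑ j ∈ range (P - i + 1), ∑ k ∈ range (P - i - j + 1),
          ψhat i ω * πhat j ω * ψ k * ε (t0 - ↑(i + j + k)) ω :=
  sum_forecastTriples h P fun i j k => ψhat i ω * πhat j ω * ψ k * ε (t0 - ↑(i + j + k)) ω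

variable {mhat : MeasurableSpace Ω}

theorem measurable_forecastCoeff (hψhat : ∀ i, Measurable[mhat] (ψhat i))
    (hπhat : ∀ j, Measurable[mhat] (πhat j)) (p : (_ : ℕ) × (_ : ℕ) × ℕ) :
    Measurable[mhat] (forecastCoeff ψ ψhat πhat p) := by
  unfold forecastCoeff
  fun_prop

theorem integrable_const_mul_forecastCoeff
    (hint2 : ∀ i j, Integrable (fun ω => ψhat i ω * πhat j ω) μ) (c : ℝ)
    (p : (_ : ℕ) × (_ : ℕ) × ℕ) :
    Integrable (fun ω => c * forecastCoeff ψ ψhat πhat p ω) μ :=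
  ((hint2 p.1 p.2.1).mul_const (ψ p.2.2)).const_mul c

theorem integral_const_mul_forecastCoeff (c : ℝ) (p : (_ : ℕ) × (_ : ℕ) × ℕ) :
    ∫ ω, c * forecastCoeff ψ ψhat πhat p ω ∂μ
      = c * ψ p.2.2 * ∫ ω, ψhat p.1 ω * πhat p.2.1 ω ∂μ := by
  simp only [forecastCoeff, integral_const_mul, integral_mul_const]
  ring

theorem integrable_forecastCoeff_mul_forecastCoeff
    (hint4 : ∀ i j i' j', Integrable (fun ω => ψhat i ω * πhat j ω * ψhat i' ω * πhat j' ω) μ)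
    (p q : (_ : ℕ) × (_ : ℕ) × ℕ) :
    Integrable (fun ω => forecastCoeff ψ ψhat πhat p ω * forecastCoeff ψ ψhat πhat q ω) μ :=
  ((hint4 p.1 p.2.1 q.1 q.2.1).const_mul (ψ p.2.2 * ψ q.2.2)).congr
    (ae_of_all _ fun ω => by simp only [forecastCoeff]; ring)

theorem integral_forecastCoeff_mul_forecastCoeff (p q : (_ : ℕ) × (_ : ℕ) × ℕ) :
    ∫ ω, forecastCoeff ψ ψhat πhat p ω * forecastCoeff ψ ψhat πhat q ω ∂μ
      = ψ p.2.2 * ψ q.2.2 * ∫ ω, ψhat p.1 ω * πhat p.2.1 ω * ψhat q.1 ω * πhat q.2.1 ω ∂μ := by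
  rw [← integral_const_mul]
  congr 1
  funext ω
  simp only [forecastCoeff]
  ring

namespace IsWhiteNoise

/- Deterministic coefficients are independent of the noise: take `mhat = ⊥`. -/

theorem integrable_linearProcess_mul_self [IsProbabilityMeasure μ] (hε : IsWhiteNoise μ ε σ2)
    (n : ℕ) : Integrable (fun ω => linearProcess ψ t0 ε n ω * linearProcess ψ t0 ε n ω) μ :=
  hε.integrable_sum_mul_sum _ _ (fun i _ => ψ i) (fun i _ => ψ i) _ _ (indep_bot_left _)
    (fun _ _ => measurable_const) (fun _ _ => integrable_const _)

theorem integral_linearProcess_mul_self [IsProbabilityMeasure μ] (hε : IsWhiteNoise μ ε σ2)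
    (n : ℕ) :
    ∫ ω, linearProcess ψ t0 ε n ω * linearProcess ψ t0 ε n ω ∂μ
      = σ2 * ∑ i ∈ range n, ψ i ^ 2 := by
  refine (hε.integral_sum_mul_sum _ _ (fun i _ => ψ i) (fun i _ => ψ i) _ _ (indep_bot_left _)
    (fun _ _ => measurable_const) (fun _ _ => integrable_const _)).trans ?_
  congr 1
  refine sum_congr rfl fun i hi => ?_
  simp [hi, sq]

theorem integrable_linearProcess_mul_forecast (hε : IsWhiteNoise μ ε σ2)
    (hindep : Indep mhat (⨆ t, MeasurableSpace.comap (ε t) inferInstance) μ)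
    (hψhat : ∀ i, Measurable[mhat] (ψhat i)) (hπhat : ∀ j, Measurable[mhat] (πhat j))
    (hint2 : ∀ i j, Integrable (fun ω => ψhat i ω * πhat j ω) μ) (n h P : ℕ) :
    Integrable (fun ω => linearProcess ψ t0 ε n ω * forecast ψ ψhat πhat t0 ε h P ω) μ :=
  hε.integrable_sum_mul_sum _ _ (fun i _ => ψ i) (forecastCoeff ψ ψhat πhat) _ _ hindep
    (fun _ p => measurable_const.mul (measurable_forecastCoeff ψ ψhat πhat hψhat hπhat p))
    (fun i => integrable_const_mul_forecastCoeff ψ ψhat πhat hint2 (ψ i))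

theorem integral_linearProcess_mul_forecast (hε : IsWhiteNoise μ ε σ2)
    (hindep : Indep mhat (⨆ t, MeasurableSpace.comap (ε t) inferInstance) μ)
    (hψhat : ∀ i, Measurable[mhat] (ψhat i)) (hπhat : ∀ j, Measurable[mhat] (πhat j))
    (hint2 : ∀ i j, Integrable (fun ω => ψhat i ω * πhat j ω) μ) (h P : ℕ) :
    ∫ ω, linearProcess ψ t0 ε (P + 1) ω * forecast ψ ψhat πhat t0 ε h P ω ∂μ
      = σ2 * ∑ i ∈ Icc h P, ∑ j ∈ range (P - i + 1), ∑ k ∈ range (P - i - j + 1),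
          ψ (i + j + k) * ψ k * ∫ ω, ψhat i ω * πhat j ω ∂μ := by
  refine (hε.integral_sum_mul_sum _ _ (fun i _ => ψ i) (forecastCoeff ψ ψhat πhat) _ _ hindep
    (fun _ p => measurable_const.mul (measurable_forecastCoeff ψ ψhat πhat hψhat hπhat p))
    (fun i => integrable_const_mul_forecastCoeff ψ ψhat πhat hint2 (ψ i))).trans ?_
  rw [sum_comm, ← sum_forecastTriples]
  congr 1
  refine sum_congr rfl fun p hp => ?_
  have hlag : p.1 + p.2.1 + p.2.2 ∈ range (P + 1) :=
    mem_range.2 (Nat.lt_succ_of_le (mem_forecastTriples.1 hp).2)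
  simp only [sub_right_inj, Nat.cast_inj, mul_ite, mul_one, mul_zero, sum_ite_eq', if_pos hlag,
    integral_const_mul_forecastCoeff]

theorem integrable_forecast_mul_self (hε : IsWhiteNoise μ ε σ2)
    (hindep : Indep mhat (⨆ t, MeasurableSpace.comap (ε t) inferInstance) μ)
    (hψhat : ∀ i, Measurable[mhat] (ψhat i)) (hπhat : ∀ j, Measurable[mhat] (πhat j))
    (hint4 : ∀ i j i' j', Integrable (fun ω => ψhat i ω * πhat j ω * ψhat i' ω * πhat j' ω) μ)
    (h P : ℕ) :
    Integrable (fun ω => forecast ψ ψhat πhat t0 ε h P ω * forecast ψ ψhat πhat t0 ε h P ω) μ :=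
  hε.integrable_sum_mul_sum _ _ (forecastCoeff ψ ψhat πhat) (forecastCoeff ψ ψhat πhat) _ _ hindep
    (fun p q => (measurable_forecastCoeff ψ ψhat πhat hψhat hπhat p).mul
      (measurable_forecastCoeff ψ ψhat πhat hψhat hπhat q))
    (integrable_forecastCoeff_mul_forecastCoeff ψ ψhat πhat hint4)

theorem integral_forecast_mul_self (hε : IsWhiteNoise μ ε σ2)
    (hindep : Indep mhat (⨆ t, MeasurableSpace.comap (ε t) inferInstance) μ)
    (hψhat : ∀ i, Measurable[mhat] (ψhat i)) (hπhat : ∀ j, Measurable[mhat] (πhat j))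
    (hint4 : ∀ i j i' j', Integrable (fun ω => ψhat i ω * πhat j ω * ψhat i' ω * πhat j' ω) μ)
    (h P : ℕ) :
    ∫ ω, forecast ψ ψhat πhat t0 ε h P ω * forecast ψ ψhat πhat t0 ε h P ω ∂μ
      = σ2 * ∑ i ∈ Icc h P, ∑ j ∈ range (P - i + 1), ∑ k ∈ range (P - i - j + 1),
          ∑ i' ∈ Icc h P, ∑ j' ∈ range (P - i' + 1), ∑ k' ∈ range (P - i' - j' + 1),
            ψ k * ψ k' * (∫ ω, ψhat i ω * πhat j ω * ψhat i' ω * πhat j' ω ∂μ)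
              * (if i + j + k = i' + j' + k' then (1 : ℝ) else 0) := by
  refine (hε.integral_sum_mul_sum _ _ (forecastCoeff ψ ψhat πhat) (forecastCoeff ψ ψhat πhat)
    _ _ hindep
    (fun p q => (measurable_forecastCoeff ψ ψhat πhat hψhat hπhat p).mul
      (measurable_forecastCoeff ψ ψhat πhat hψhat hπhat q))
    (integrable_forecastCoeff_mul_forecastCoeff ψ ψhat πhat hint4)).trans ?_
  simp only [sub_right_inj, Nat.cast_inj, integral_forecastCoeff_mul_forecastCoeff,
    forecastTriples, sum_sigma]

end IsWhiteNoise

end Forecast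

theorem stmt_17_general {Ω : Type*} {m0 : MeasurableSpace Ω} (μ : Measure Ω) [IsProbabilityMeasure μ]
    (ε : ℤ → Ω → ℝ) (σ2 : ℝ)
    (hL2 : ∀ t, MemLp (ε t) 2 μ)
    (hmean : ∀ t, ∫ ω, ε t ω ∂μ = 0)
    (hvar : ∀ t, ∫ ω, (ε t ω) ^ 2 ∂μ = σ2)
    (hiid : ProbabilityTheory.iIndepFun ε μ)
    (ψ : ℕ → ℝ) (ψhat πhat : ℕ → Ω → ℝ)
    (mhat : MeasurableSpace Ω)
    (hψhat : ∀ i, Measurable[mhat] (ψhat i)) (hπhat : ∀ j, Measurable[mhat] (πhat j))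
    (hindep : ProbabilityTheory.Indep mhat
      (⨆ t : ℤ, MeasurableSpace.comap (ε t) inferInstance) μ)
    (hint2 : ∀ i j, Integrable (fun ω => ψhat i ω * πhat j ω) μ)
    (hint4 : ∀ i j i' j',
      Integrable (fun ω => ψhat i ω * πhat j ω * ψhat i' ω * πhat j' ω) μ)
    (T h r : ℕ) (P : ℕ) (hP : P = T + h - 1 + r)
    (X Xhat : Ω → ℝ)
    (hX : ∀ ω, X ω = ∑ i ∈ range (P + 1), ψ i * ε ((T : ℤ) + h - i) ω)
    (hXhat : ∀ ω, Xhat ω = ∑ i ∈ Icc h P, ∑ j ∈ range (P - i + 1), ∑ k ∈ range (P - i - j + 1),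
      ψhat i ω * πhat j ω * ψ k * ε ((T : ℤ) + h - i - j - k) ω) :
    ∫ ω, (X ω - Xhat ω) ^ 2 ∂μ
      = σ2 * ∑ i ∈ range h, (ψ i) ^ 2
        + σ2 * (∑ i ∈ Icc h P, (ψ i) ^ 2
          - 2 * ∑ i ∈ Icc h P, ∑ j ∈ range (P - i + 1), ∑ k ∈ range (P - i - j + 1),
              ψ (i + j + k) * ψ k * ∫ ω, ψhat i ω * πhat j ω ∂μ
          + ∑ i ∈ Icc h P, ∑ j ∈ range (P - i + 1), ∑ k ∈ range (P - i - j + 1),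
            ∑ i' ∈ Icc h P, ∑ j' ∈ range (P - i' + 1), ∑ k' ∈ range (P - i' - j' + 1),
              ψ k * ψ k' * (∫ ω, ψhat i ω * πhat j ω * ψhat i' ω * πhat j' ω ∂μ)
                * (if i + j + k = i' + j' + k' then (1 : ℝ) else 0)) := by
  have hε := IsWhiteNoise.of_iIndepFun hL2 hmean hvar hiid
  have hX' : X = linearProcess ψ ((T : ℤ) + h) ε (P + 1) := funext hX
  have hXhat' : Xhat = forecast ψ ψhat πhat ((T : ℤ) + h) ε h P := by
    funext ω
    simp only [hXhat, forecast_eq, Nat.cast_add, sub_add_eq_sub_sub]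
  have hsplit : ∑ i ∈ range (P + 1), ψ i ^ 2 = ∑ i ∈ range h, ψ i ^ 2 + ∑ i ∈ Icc h P, ψ i ^ 2 := by
    rw [← sum_range_add_sum_Ico _ (by omega : h ≤ P + 1), Ico_add_one_right_eq_Icc]
  subst hX' hXhat'
  rw [integral_sub_sq_eq (hε.integrable_linearProcess_mul_self ψ _ _)
      (hε.integrable_linearProcess_mul_forecast ψ ψhat πhat _ hindep hψhat hπhat hint2 _ h P)
      (hε.integrable_forecast_mul_self ψ ψhat πhat _ hindep hψhat hπhat hint4 h P),
    hε.integral_linearProcess_mul_self, hsplit,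
    hε.integral_linearProcess_mul_forecast ψ ψhat πhat _ hindep hψhat hπhat hint2,
    hε.integral_forecast_mul_self ψ ψhat πhat _ hindep hψhat hπhat hint4]
  ring

/-- Total forecasting error decomposition: with IID innovations independent of the
estimated coefficients `ψ̂, π̂`, `P = T+h−1+r`, `X_{T+h} = ∑_{i=0}^{P} ψ_i ε_{T+h−i}` and
`X̂_{T+h} = ∑_{i=h}^{P} ∑_{j=0}^{P−i} ∑_{k=0}^{P−i−j} ψ̂_i π̂_j ψ_k ε_{T+h−i−j−k}`,
the MSFE `E[(X_{T+h} − X̂_{T+h})²]` equals the characteristic error `σ² ∑_{i<h} ψ_i²` plus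
the estimation-based error. -/
theorem stmt_17 {Ω : Type*} {m0 : MeasurableSpace Ω} (μ : Measure Ω) [IsProbabilityMeasure μ]
    (ε : ℤ → Ω → ℝ) (σ2 : ℝ)
    (hεmeas : ∀ t, Measurable (ε t))
    (hL2 : ∀ t, MemLp (ε t) 2 μ)
    (hmean : ∀ t, ∫ ω, ε t ω ∂μ = 0)
    (hvar : ∀ t, ∫ ω, (ε t ω) ^ 2 ∂μ = σ2)
    (hiid : ProbabilityTheory.iIndepFun ε μ)
    (hident : ∀ s t, ProbabilityTheory.IdentDistrib (ε s) (ε t) μ μ)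
    (ψ π : ℕ → ℝ) (ψhat πhat : ℕ → Ω → ℝ)
    (mhat : MeasurableSpace Ω) (hmhat : mhat ≤ m0)
    (hψhat : ∀ i, Measurable[mhat] (ψhat i)) (hπhat : ∀ j, Measurable[mhat] (πhat j))
    (hindep : ProbabilityTheory.Indep mhat
      (⨆ t : ℤ, MeasurableSpace.comap (ε t) inferInstance) μ)
    (hint2 : ∀ i j, Integrable (fun ω => ψhat i ω * πhat j ω) μ)
    (hint4 : ∀ i j i' j',
      Integrable (fun ω => ψhat i ω * πhat j ω * ψhat i' ω * πhat j' ω) μ)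
    (T h r : ℕ) (hh : 1 ≤ h) (P : ℕ) (hP : P = T + h - 1 + r)
    (X Xhat : Ω → ℝ)
    (hX : ∀ ω, X ω = ∑ i ∈ range (P + 1), ψ i * ε ((T : ℤ) + h - i) ω)
    (hXhat : ∀ ω, Xhat ω = ∑ i ∈ Icc h P, ∑ j ∈ range (P - i + 1), ∑ k ∈ range (P - i - j + 1),
      ψhat i ω * πhat j ω * ψ k * ε ((T : ℤ) + h - i - j - k) ω) :
    ∫ ω, (X ω - Xhat ω) ^ 2 ∂μ
      = σ2 * ∑ i ∈ range h, (ψ i) ^ 2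
        + σ2 * (∑ i ∈ Icc h P, (ψ i) ^ 2
          - 2 * ∑ i ∈ Icc h P, ∑ j ∈ range (P - i + 1), ∑ k ∈ range (P - i - j + 1),
              ψ (i + j + k) * ψ k * ∫ ω, ψhat i ω * πhat j ω ∂μ
          + ∑ i ∈ Icc h P, ∑ j ∈ range (P - i + 1), ∑ k ∈ range (P - i - j + 1),
            ∑ i' ∈ Icc h P, ∑ j' ∈ range (P - i' + 1), ∑ k' ∈ range (P - i' - j' + 1),
              ψ k * ψ k' * (∫ ω, ψhat i ω * πhat j ω * ψhat i' ω * πhat j' ω ∂μ)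
                * (if i + j + k = i' + j' + k' then (1 : ℝ) else 0)) :=
  stmt_17_general (m0 := m0) μ ε σ2 hL2 hmean hvar hiid ψ ψhat πhat mhat hψhat hπhat hindep hint2
    hint4 T h r P hP X Xhat hX hXhat
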